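/- arXiv:1402.5391 — 3 statements merged into one kernel-verified Lean document; each statement's English description precedes it below -/
import Mathlib

section
/- Non-monotonizability of ATO-TOS (Proposition 4.1): suppose I ≥ 3 and μ_i(k) > 0 for every i ∈ {1,…,I} and every 1 ≤ k ≤ C_i. If ⪯ is a partial order on X such that every event of E is monotone for f_T (i.e. x ⪯ y implies f_T(x, a) ⪯ f_T(y, a) for all a ∈ E), then ⪯ is the trivial order: x ⪯ y if and only if x = y. -/
open MeasureTheory Finset ENNReal

namespace ATO

/-- Events: joint arrivals `d A` for subsets `A`, and services `s i j`. -/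
inductive Ev (I : ℕ) where
  | d : Finset (Fin I) → Ev I
  | s : Fin I → ℕ → Ev I

instance (I : ℕ) : MeasurableSpace (Ev I) := ⊤

/-- Valid events: arrivals for nonempty `A`, services `s i j` with `1 ≤ j ≤ C i`. -/
def ValidEv {I : ℕ} (C : Fin I → ℕ) : Ev I → Prop
  | .d A => A.Nonempty
  | .s i j => 1 ≤ j ∧ j ≤ C i

/-- The state space `X = {0,…,C 1} × ⋯ × {0,…,C I}`. -/
def Xspace {I : ℕ} (C : Fin I → ℕ) : Set (Fin I → ℕ) := {x | ∀ i, x i ≤ C i}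

/-- ATO-POS transition function with individual replenishments. -/
noncomputable def fP {I : ℕ} (C : Fin I → ℕ) (μ : Fin I → ℕ → ℝ) (ℓ : Fin I → ℕ → ℕ)
    (x : Fin I → ℕ) : Ev I → (Fin I → ℕ)
  | .d A => fun k => x k + if k ∈ A ∧ x k < C k then 1 else 0
  | .s i j => fun k => if k = i ∧ μ i (ℓ i j) ≤ μ i (x i) then x k - 1 else x k

/-- ATO-TOS transition function with individual replenishments. -/
noncomputable def fT {I : ℕ} (C : Fin I → ℕ) (μ : Fin I → ℕ → ℝ) (ℓ : Fin I → ℕ → ℕ)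
    (x : Fin I → ℕ) : Ev I → (Fin I → ℕ)
  | .d A => fun k => x k + if k ∈ A ∧ (∀ i ∈ A, x i < C i) then 1 else 0
  | .s i j => fP C μ ℓ x (.s i j)

/-- Iterated application of a transition function along a word (head applied first). -/
def iter {I : ℕ} {σ : Type*} (f : σ → Ev I → σ) : σ → List (Ev I) → σ
  | x, [] => x
  | x, a :: w => iter f (f x a) w

/-- The backward word `u_t u_{t-1} ⋯ u_1` (with `u_t` applied first). -/
def bword {I : ℕ} (ω : ℕ → Ev I) (t : ℕ) : List (Ev I) :=
  ((List.range t).reverse).map fun s => ω (s + 1)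

/-- The forward word `u_1 u_2 ⋯ u_t` (with `u_1` applied first). -/
def fword {I : ℕ} (ω : ℕ → Ev I) (t : ℕ) : List (Ev I) :=
  (List.range t).map fun s => ω (s + 1)

/-- The distribution `ν` on events: `ν (d A) = λ_A / Λ`, `ν (s i j) = (μ_i(ℓ_i^{(j)}) − μ_i(ℓ_i^{(j-1)}))/Λ`. -/
noncomputable def probA {I : ℕ} (C : Fin I → ℕ) (μ : Fin I → ℕ → ℝ) (ℓ : Fin I → ℕ → ℕ)
    (lam : Finset (Fin I) → ℝ) (Λ : ℝ) : Ev I → ℝ≥0∞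
  | .d A => if A.Nonempty then ENNReal.ofReal (lam A / Λ) else 0
  | .s i j => if 1 ≤ j ∧ j ≤ C i then ENNReal.ofReal ((μ i (ℓ i j) - μ i (ℓ i (j - 1))) / Λ) else 0


section Aux

variable {I : ℕ} {C : Fin I → ℕ} {μ : Fin I → ℕ → ℝ} {ℓ : Fin I → ℕ → ℕ}

lemma mem_fT {x : Fin I → ℕ} (hx : x ∈ Xspace C) (a : Ev I) :
    fT C μ ℓ x a ∈ Xspace C := by
  cases a with
  | d A =>
    intro k
    have hk := hx k
    simp only [fT]
    split_ifs with h
    · have := h.2 k h.1; omega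
    · omega
  | s i j =>
    intro k
    have hk := hx k
    simp only [fT, fP]
    split_ifs <;> omega

lemma chainμ (i : Fin I) (hsort : ∀ j, j < C i → μ i (ℓ i j) ≤ μ i (ℓ i (j + 1))) :
    ∀ j1 j2, j1 ≤ j2 → j2 ≤ C i → μ i (ℓ i j1) ≤ μ i (ℓ i j2) := by
  intro j1 j2
  induction j2 with
  | zero =>
    intro h12 _
    obtain rfl : j1 = 0 := Nat.le_zero.mp h12
    exact le_rfl
  | succ n ih =>
    intro h12 h2
    rcases eq_or_lt_of_le h12 with rfl | h
    · exact le_rfl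
    · exact le_trans (ih (by omega) (by omega)) (hsort n (by omega))

lemma ell_zero (i : Fin I) (hμ0 : μ i 0 = 0) (hμpos : ∀ k, 1 ≤ k → k ≤ C i → 0 < μ i k)
    (hℓ : Set.BijOn (ℓ i) (Set.Iic (C i)) (Set.Iic (C i)))
    (hsort : ∀ j, j < C i → μ i (ℓ i j) ≤ μ i (ℓ i (j + 1))) : ℓ i 0 = 0 := by
  by_contra h
  obtain ⟨j, hj, hje⟩ := hℓ.surjOn (show (0:ℕ) ∈ Set.Iic (C i) from Set.mem_Iic.mpr (Nat.zero_le _))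
  have h1 : μ i (ℓ i 0) ≤ μ i (ℓ i j) := chainμ i hsort 0 j (Nat.zero_le _) (Set.mem_Iic.mp hj)
  rw [hje, hμ0] at h1
  have h0C : ℓ i 0 ≤ C i := Set.mem_Iic.mp (hℓ.mapsTo (Set.mem_Iic.mpr (Nat.zero_le _)))
  have := hμpos (ℓ i 0) (Nat.one_le_iff_ne_zero.mpr h) h0C
  linarith

lemma sOne_cond (i : Fin I) (hCi : 1 ≤ C i) (hμ0 : μ i 0 = 0)
    (hμpos : ∀ k, 1 ≤ k → k ≤ C i → 0 < μ i k)
    (hℓ : Set.BijOn (ℓ i) (Set.Iic (C i)) (Set.Iic (C i)))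
    (hsort : ∀ j, j < C i → μ i (ℓ i j) ≤ μ i (ℓ i (j + 1)))
    {n : ℕ} (hn : n ≤ C i) : μ i (ℓ i 1) ≤ μ i n ↔ 1 ≤ n := by
  have h0 : ℓ i 0 = 0 := ell_zero i hμ0 hμpos hℓ hsort
  have h1pos : 1 ≤ ℓ i 1 := by
    rcases Nat.eq_zero_or_pos (ℓ i 1) with h | h
    · exfalso
      have h10 : (1:ℕ) = 0 := hℓ.injOn (Set.mem_Iic.mpr hCi) (Set.mem_Iic.mpr (Nat.zero_le _))
        (by rw [h, h0])
      omega
    · exact h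
  have h1le : ℓ i 1 ≤ C i := Set.mem_Iic.mp (hℓ.mapsTo (Set.mem_Iic.mpr hCi))
  constructor
  · intro h
    by_contra hn0
    have hn0' : n = 0 := by omega
    rw [hn0', hμ0] at h
    have := hμpos (ℓ i 1) h1pos h1le
    linarith
  · intro h
    obtain ⟨j, hj, hje⟩ := hℓ.surjOn (Set.mem_Iic.mpr hn)
    have hj1 : 1 ≤ j := by
      rcases Nat.eq_zero_or_pos j with rfl | h'
      · rw [h0] at hje; omega
      · exact h'
    calc μ i (ℓ i 1) ≤ μ i (ℓ i j) := chainμ i hsort 1 j hj1 (Set.mem_Iic.mp hj)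
    _ = μ i n := by rw [hje]

lemma fT_sOne {x : Fin I → ℕ} (i : Fin I)
    (hcond : μ i (ℓ i 1) ≤ μ i (x i) ↔ 1 ≤ x i) :
    fT C μ ℓ x (.s i 1) = fun k => if k = i then x i - 1 else x k := by
  funext k
  simp only [fT, fP]
  by_cases hk : k = i
  · subst hk
    by_cases h1 : 1 ≤ x k
    · rw [if_pos ⟨rfl, hcond.mpr h1⟩, if_pos rfl]
    · rw [if_neg (by rintro ⟨-, h⟩; exact h1 (hcond.mp h)), if_pos rfl]
      omega
  · rw [if_neg (by rintro ⟨h, -⟩; exact hk h), if_neg hk]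

lemma fT_dSingle (x : Fin I → ℕ) (m : Fin I) :
    fT C μ ℓ x (.d {m}) = fun k => if k = m ∧ x m < C m then x k + 1 else x k := by
  funext k
  simp only [fT]
  have hiff : (k ∈ ({m} : Finset (Fin I)) ∧ ∀ i ∈ ({m} : Finset (Fin I)), x i < C i)
      ↔ (k = m ∧ x m < C m) := by simp
  by_cases h : k = m ∧ x m < C m
  · rw [if_pos (hiff.mpr h), if_pos h]
  · rw [if_neg (fun hc => h (hiff.mp hc)), if_neg h, Nat.add_zero]

lemma fT_dPair {p a : Fin I} (hap : a ≠ p) (x : Fin I → ℕ) :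
    fT C μ ℓ x (.d {p, a}) =
      fun k => if (k = p ∨ k = a) ∧ x p < C p ∧ x a < C a then x k + 1 else x k := by
  funext k
  simp only [fT]
  have hiff : (k ∈ ({p, a} : Finset (Fin I)) ∧ ∀ i ∈ ({p, a} : Finset (Fin I)), x i < C i)
      ↔ ((k = p ∨ k = a) ∧ x p < C p ∧ x a < C a) := by simp
  by_cases h : (k = p ∨ k = a) ∧ x p < C p ∧ x a < C a
  · rw [if_pos (hiff.mpr h), if_pos h]
  · rw [if_neg (fun hc => h (hiff.mp hc)), if_neg h, Nat.add_zero]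

/-- word of `n` services `s m 1` -/
def zwd {I : ℕ} (m : Fin I) (n : ℕ) : List (Ev I) := List.replicate n (Ev.s m 1)

/-- word of `n` singleton demands `d {m}` -/
def iwd {I : ℕ} (m : Fin I) (n : ℕ) : List (Ev I) := List.replicate n (Ev.d {m})

/-- word zeroing out all coordinates in the list `S` -/
def ZWd {I : ℕ} (C : Fin I → ℕ) : List (Fin I) → List (Ev I)
  | [] => []
  | m :: S => zwd m (C m) ++ ZWd C S

lemma iter_append {σ : Type*} (f : σ → Ev I → σ) (x : σ) (w1 w2 : List (Ev I)) :
    iter f x (w1 ++ w2) = iter f (iter f x w1) w2 := by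
  induction w1 generalizing x with
  | nil => rfl
  | cons a w ih => exact ih (f x a)

lemma iter_single {σ : Type*} (f : σ → Ev I → σ) (x : σ) (e : Ev I) :
    iter f x [e] = f x e := rfl

lemma iter_mem {x : Fin I → ℕ} (hx : x ∈ Xspace C) (w : List (Ev I)) :
    iter (fT C μ ℓ) x w ∈ Xspace C := by
  induction w generalizing x with
  | nil => exact hx
  | cons a w ih => exact ih (mem_fT hx a)

lemma iter_mono {r : (Fin I → ℕ) → (Fin I → ℕ) → Prop}
    (hmono : ∀ a, ValidEv C a → ∀ x ∈ Xspace C, ∀ y ∈ Xspace C,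
      r x y → r (fT C μ ℓ x a) (fT C μ ℓ y a))
    {x y : Fin I → ℕ} (hx : x ∈ Xspace C) (hy : y ∈ Xspace C) (hr : r x y)
    (w : List (Ev I)) (hw : ∀ a ∈ w, ValidEv C a) :
    r (iter (fT C μ ℓ) x w) (iter (fT C μ ℓ) y w) := by
  induction w generalizing x y with
  | nil => exact hr
  | cons a w ih =>
    exact ih (mem_fT hx a) (mem_fT hy a)
      (hmono a (hw a (by simp)) x hx y hy hr) (fun b hb => hw b (by simp [hb]))

lemma iter_zwd (hs1 : ∀ (m : Fin I), ∀ x ∈ Xspace C,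
      fT C μ ℓ x (.s m 1) = fun k => if k = m then x m - 1 else x k)
    (m : Fin I) (n : ℕ) : ∀ x ∈ Xspace C,
    iter (fT C μ ℓ) x (zwd m n) = fun k => if k = m then x m - n else x k := by
  induction n with
  | zero =>
    intro x hx; funext k
    by_cases hk : k = m <;> simp [zwd, iter, hk]
  | succ n ih =>
    intro x hx
    have hrep : zwd m (n+1) = Ev.s m 1 :: zwd m n := by
      simp [zwd, List.replicate_succ]
    rw [hrep]
    show iter (fT C μ ℓ) (fT C μ ℓ x (.s m 1)) (zwd m n) = _
    rw [hs1 m x hx]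
    have hx' : (fun k => if k = m then x m - 1 else x k) ∈ Xspace C := by
      intro k; have h1 := hx k; have h2 := hx m
      dsimp only; split_ifs with h
      · rw [h]; omega
      · omega
    rw [ih _ hx']
    funext k
    by_cases hk : k = m
    · rw [if_pos hk, if_pos hk, if_pos rfl]
      omega
    · rw [if_neg hk, if_neg hk, if_neg hk]

lemma iter_iwd (m : Fin I) (n : ℕ) : ∀ x ∈ Xspace C,
    iter (fT C μ ℓ) x (iwd m n) = fun k => if k = m then min (C m) (x m + n) else x k := by
  induction n with
  | zero =>
    intro x hx; funext k
    have := hx m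
    by_cases hk : k = m <;> simp [iwd, iter, hk] <;> omega
  | succ n ih =>
    intro x hx
    have hrep : iwd m (n+1) = Ev.d {m} :: iwd m n := by
      simp [iwd, List.replicate_succ]
    rw [hrep]
    show iter (fT C μ ℓ) (fT C μ ℓ x (.d {m})) (iwd m n) = _
    rw [fT_dSingle x m]
    have hx' : (fun k => if k = m ∧ x m < C m then x k + 1 else x k) ∈ Xspace C := by
      intro k; have h1 := hx k; have h2 := hx m
      dsimp only
      split_ifs with h
      · obtain ⟨rfl, h3⟩ := h; omega
      · omega
    rw [ih _ hx']
    funext k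
    have hxm := hx m
    by_cases hk : k = m
    · rw [if_pos hk, if_pos hk]
      by_cases hc : x m < C m
      · rw [if_pos ⟨rfl, hc⟩]; omega
      · rw [if_neg (fun h => hc h.2)]; omega
    · rw [if_neg hk, if_neg hk, if_neg (fun h => hk h.1)]

lemma iter_ZWd (hs1 : ∀ (m : Fin I), ∀ x ∈ Xspace C,
      fT C μ ℓ x (.s m 1) = fun k => if k = m then x m - 1 else x k)
    (S : List (Fin I)) : ∀ x ∈ Xspace C,
    iter (fT C μ ℓ) x (ZWd C S) = fun k => if k ∈ S then 0 else x k := by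
  induction S with
  | nil => intro x hx; funext k; simp [ZWd, iter]
  | cons m S ih =>
    intro x hx
    show iter _ x (zwd m (C m) ++ ZWd C S) = _
    rw [iter_append, iter_zwd hs1 m (C m) x hx]
    have hx' : (fun k => if k = m then x m - C m else x k) ∈ Xspace C := by
      intro k; have h1 := hx k; have h2 := hx m
      dsimp only; split_ifs with h
      · rw [h]; omega
      · omega
    rw [ih _ hx']
    funext k
    have hxm := hx m
    by_cases h1 : k ∈ S <;> by_cases h2 : k = m <;>
      simp [h1, h2, List.mem_cons] <;> omega

lemma valid_zwd (hC : ∀ i, 1 ≤ C i) (m : Fin I) (n : ℕ) :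
    ∀ a ∈ zwd (I := I) m n, ValidEv C a := by
  intro a ha
  rw [zwd, List.mem_replicate] at ha
  rw [ha.2]
  exact ⟨le_rfl, hC m⟩

lemma valid_iwd (m : Fin I) (n : ℕ) : ∀ a ∈ iwd (I := I) m n, ValidEv C a := by
  intro a ha
  rw [iwd, List.mem_replicate] at ha
  rw [ha.2]
  exact Finset.singleton_nonempty m

lemma valid_ZWd (hC : ∀ i, 1 ≤ C i) (S : List (Fin I)) :
    ∀ a ∈ ZWd C S, ValidEv C a := by
  induction S with
  | nil => intro a ha; simp [ZWd] at ha
  | cons m S ih =>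
    intro a ha
    rw [show ZWd C (m :: S) = zwd m (C m) ++ ZWd C S from rfl, List.mem_append] at ha
    rcases ha with h | h
    · exact valid_zwd hC m (C m) a h
    · exact ih a h

/-- The key word: zero out everything off `p`, push `p` up so a state with `p`-value `t`
hits capacity, fire the pair demand `d {p,a}`, then zero out `p`. -/
def Wword {I : ℕ} (C : Fin I → ℕ) (p a : Fin I) (t : ℕ) : List (Ev I) :=
  ZWd C ((List.finRange I).filter (fun m => decide (m ≠ p))) ++ iwd p (C p - t)
    ++ [Ev.d {p, a}] ++ zwd p (C p)

lemma valid_W (hC : ∀ i, 1 ≤ C i) (p a : Fin I) (t : ℕ) :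
    ∀ e ∈ Wword C p a t, ValidEv C e := by
  intro e he
  rw [Wword] at he
  simp only [List.mem_append, List.mem_singleton] at he
  rcases he with ((h | h) | h) | h
  · exact valid_ZWd hC _ e h
  · exact valid_iwd _ _ e h
  · rw [h]; exact Finset.insert_nonempty p {a}
  · exact valid_zwd hC _ _ e h

lemma core_small {p a : Fin I} (hap : a ≠ p) (hCa : 1 ≤ C a)
    (hs1 : ∀ (m : Fin I), ∀ x ∈ Xspace C,
      fT C μ ℓ x (.s m 1) = fun k => if k = m then x m - 1 else x k)
    {x : Fin I → ℕ} (hx : x ∈ Xspace C) {t : ℕ} (hxt : x p < t) (htC : t ≤ C p) :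
    iter (fT C μ ℓ) x (Wword C p a t) = fun k => if k = a then 1 else 0 := by
  classical
  set F := (List.finRange I).filter (fun m => decide (m ≠ p)) with hF
  have hfil : ∀ k : Fin I, (k ∈ F) ↔ k ≠ p := by
    intro k; rw [hF]; simp [List.mem_filter]
  set x0 : Fin I → ℕ := fun k => if k ∈ F then 0 else x k with hx0
  have hx0mem : x0 ∈ Xspace C := by
    intro k; rw [hx0]
    show (if k ∈ F then 0 else x k) ≤ C k
    split_ifs
    · exact Nat.zero_le _
    · exact hx k
  have hx0pv : x0 p = x p := by
    rw [hx0]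
    show (if p ∈ F then 0 else x p) = x p
    rw [if_neg (by simp [hfil])]
  have hx0ne : ∀ k, k ≠ p → x0 k = 0 := by
    intro k hk; rw [hx0]
    show (if k ∈ F then 0 else x k) = 0
    rw [if_pos ((hfil k).mpr hk)]
  set x1 : Fin I → ℕ := fun k => if k = p then min (C p) (x0 p + (C p - t)) else x0 k with hx1
  have hx1p : x1 p = x p + (C p - t) := by
    rw [hx1]
    show (if p = p then min (C p) (x0 p + (C p - t)) else x0 p) = _
    rw [if_pos rfl, hx0pv]; omega
  have hx1plt : x1 p < C p := by rw [hx1p]; omega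
  have hx1a : x1 a = 0 := by
    rw [hx1]
    show (if a = p then min (C p) (x0 p + (C p - t)) else x0 a) = 0
    rw [if_neg hap]; exact hx0ne a hap
  have hx1ne : ∀ k, k ≠ p → x1 k = x0 k := by
    intro k hk; rw [hx1]
    show (if k = p then min (C p) (x0 p + (C p - t)) else x0 k) = x0 k
    rw [if_neg hk]
  have hx1mem : x1 ∈ Xspace C := by
    intro k; rw [hx1]
    show (if k = p then min (C p) (x0 p + (C p - t)) else x0 k) ≤ C k
    split_ifs with h
    · subst h; exact min_le_left _ _
    · exact hx0mem k
  set x2 : Fin I → ℕ :=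
    fun k => if (k = p ∨ k = a) ∧ x1 p < C p ∧ x1 a < C a then x1 k + 1 else x1 k with hx2
  have hCa' : x1 a < C a := by rw [hx1a]; exact hCa
  have hx2p : x2 p = x1 p + 1 := by
    rw [hx2]
    show (if (p = p ∨ p = a) ∧ x1 p < C p ∧ x1 a < C a then x1 p + 1 else x1 p) = _
    rw [if_pos ⟨Or.inl rfl, hx1plt, hCa'⟩]
  have hx2a : x2 a = 1 := by
    rw [hx2]
    show (if (a = p ∨ a = a) ∧ x1 p < C p ∧ x1 a < C a then x1 a + 1 else x1 a) = 1
    rw [if_pos ⟨Or.inr rfl, hx1plt, hCa'⟩, hx1a]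
  have hx2ne : ∀ k, k ≠ p → k ≠ a → x2 k = 0 := by
    intro k hk1 hk2
    rw [hx2]
    show (if (k = p ∨ k = a) ∧ x1 p < C p ∧ x1 a < C a then x1 k + 1 else x1 k) = 0
    rw [if_neg (by tauto), hx1ne k hk1, hx0ne k hk1]
  have hx2mem : x2 ∈ Xspace C := by
    rw [hx2, ← fT_dPair (C := C) (μ := μ) (ℓ := ℓ) hap x1]
    exact mem_fT hx1mem _
  rw [Wword, iter_append, iter_append, iter_append,
    iter_ZWd hs1 F x hx, ← hx0, iter_iwd p (C p - t) x0 hx0mem, ← hx1,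
    iter_single, fT_dPair hap x1, ← hx2, iter_zwd hs1 p (C p) x2 hx2mem]
  funext k
  show (if k = p then x2 p - C p else x2 k) = if k = a then 1 else 0
  by_cases hk : k = p
  · rw [if_pos hk, if_neg (by rw [hk]; exact fun h => hap h.symm)]
    have : x2 p ≤ C p := hx2mem p
    omega
  · rw [if_neg hk]
    by_cases hk2 : k = a
    · rw [if_pos hk2, hk2, hx2a]
    · rw [if_neg hk2, hx2ne k hk hk2]

lemma core_big {p a : Fin I} (hap : a ≠ p)
    (hs1 : ∀ (m : Fin I), ∀ x ∈ Xspace C,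
      fT C μ ℓ x (.s m 1) = fun k => if k = m then x m - 1 else x k)
    {y : Fin I → ℕ} (hy : y ∈ Xspace C) {t : ℕ} (hyt : y p = t) (htC : t ≤ C p) :
    iter (fT C μ ℓ) y (Wword C p a t) = fun _ => 0 := by
  classical
  set F := (List.finRange I).filter (fun m => decide (m ≠ p)) with hF
  have hfil : ∀ k : Fin I, (k ∈ F) ↔ k ≠ p := by
    intro k; rw [hF]; simp [List.mem_filter]
  set y0 : Fin I → ℕ := fun k => if k ∈ F then 0 else y k with hy0
  have hy0mem : y0 ∈ Xspace C := by
    intro k; rw [hy0]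
    show (if k ∈ F then 0 else y k) ≤ C k
    split_ifs
    · exact Nat.zero_le _
    · exact hy k
  have hy0pv : y0 p = y p := by
    rw [hy0]
    show (if p ∈ F then 0 else y p) = y p
    rw [if_neg (by simp [hfil])]
  have hy0ne : ∀ k, k ≠ p → y0 k = 0 := by
    intro k hk; rw [hy0]
    show (if k ∈ F then 0 else y k) = 0
    rw [if_pos ((hfil k).mpr hk)]
  set y1 : Fin I → ℕ := fun k => if k = p then min (C p) (y0 p + (C p - t)) else y0 k with hy1
  have hy1p : y1 p = C p := by
    rw [hy1]
    show (if p = p then min (C p) (y0 p + (C p - t)) else y0 p) = C p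
    rw [if_pos rfl, hy0pv, hyt]; omega
  have hy1ne : ∀ k, k ≠ p → y1 k = 0 := by
    intro k hk; rw [hy1]
    show (if k = p then min (C p) (y0 p + (C p - t)) else y0 k) = 0
    rw [if_neg hk]; exact hy0ne k hk
  have hy1mem : y1 ∈ Xspace C := by
    intro k; rw [hy1]
    show (if k = p then min (C p) (y0 p + (C p - t)) else y0 k) ≤ C k
    split_ifs with h
    · subst h; exact min_le_left _ _
    · exact hy0mem k
  have hstep : fT C μ ℓ y1 (.d {p, a}) = y1 := by
    rw [fT_dPair hap y1]
    funext k
    show (if (k = p ∨ k = a) ∧ y1 p < C p ∧ y1 a < C a then y1 k + 1 else y1 k) = y1 k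
    rw [if_neg (by rintro ⟨-, h, -⟩; rw [hy1p] at h; omega)]
  rw [Wword, iter_append, iter_append, iter_append,
    iter_ZWd hs1 F y hy, ← hy0, iter_iwd p (C p - t) y0 hy0mem, ← hy1,
    iter_single, hstep, iter_zwd hs1 p (C p) y1 hy1mem]
  funext k
  show (if k = p then y1 p - C p else y1 k) = 0
  by_cases hk : k = p
  · rw [if_pos hk, hy1p]; omega
  · rw [if_neg hk, hy1ne k hk]

end Aux

/-- Proposition 4.1: non-monotonizability of ATO-TOS for `I ≥ 3`. Any partial order on `X`
making every event of `E` monotone for `f_T` is the trivial (discrete) order. -/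
theorem stmt5 (I : ℕ) (hI : 3 ≤ I) (C : Fin I → ℕ) (hC : ∀ i, 1 ≤ C i)
    (μ : Fin I → ℕ → ℝ) (hμ0 : ∀ i, μ i 0 = 0) (hμnn : ∀ i k, k ≤ C i → 0 ≤ μ i k)
    (hμpos : ∀ i k, 1 ≤ k → k ≤ C i → 0 < μ i k)
    (ℓ : Fin I → ℕ → ℕ) (hℓ : ∀ i, Set.BijOn (ℓ i) (Set.Iic (C i)) (Set.Iic (C i)))
    (hsort : ∀ i j, j < C i → μ i (ℓ i j) ≤ μ i (ℓ i (j + 1)))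
    (r : (Fin I → ℕ) → (Fin I → ℕ) → Prop)
    (hrefl : ∀ x ∈ Xspace C, r x x)
    (hantisymm : ∀ x ∈ Xspace C, ∀ y ∈ Xspace C, r x y → r y x → x = y)
    (htrans : ∀ x ∈ Xspace C, ∀ y ∈ Xspace C, ∀ z ∈ Xspace C, r x y → r y z → r x z)
    (hmono : ∀ a, ValidEv C a → ∀ x ∈ Xspace C, ∀ y ∈ Xspace C,
        r x y → r (fT C μ ℓ x a) (fT C μ ℓ y a)) :
    ∀ x ∈ Xspace C, ∀ y ∈ Xspace C, (r x y ↔ x = y) := by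
  classical
  -- the clean form of the `s i 1` service events
  have hs1 : ∀ (m : Fin I), ∀ x ∈ Xspace C,
      fT C μ ℓ x (.s m 1) = fun k => if k = m then x m - 1 else x k := by
    intro m x hx
    exact fT_sOne m (sOne_cond m (hC m) (hμ0 m) (fun k h1 h2 => hμpos m k h1 h2) (hℓ m)
      (fun j hj => hsort m j hj) (hx m))
  have h0X : (fun _ : Fin I => 0) ∈ Xspace C := fun k => Nat.zero_le _
  have heV : ∀ a : Fin I, (fun k => if k = a then 1 else 0) ∈ Xspace C := by
    intro a k
    show (if k = a then 1 else 0) ≤ C k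
    split_ifs with h
    · rw [h]; exact hC a
    · exact Nat.zero_le _
  -- step A : from a related pair strictly increasing at p, produce r e_a 0
  have stepA : ∀ x ∈ Xspace C, ∀ y ∈ Xspace C, r x y → ∀ p a : Fin I, a ≠ p → x p < y p →
      r (fun k => if k = a then 1 else 0) (fun _ => 0) := by
    intro x hx y hy hr p a hap hlt
    have hw := iter_mono hmono hx hy hr (Wword C p a (y p)) (valid_W hC p a (y p))
    rwa [core_small hap (hC a) hs1 hx hlt (hy p),
      core_big hap hs1 hy rfl (hy p)] at hw
  -- step B : from a related pair strictly decreasing at p, produce r 0 e_a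
  have stepB : ∀ x ∈ Xspace C, ∀ y ∈ Xspace C, r x y → ∀ p a : Fin I, a ≠ p → y p < x p →
      r (fun _ => 0) (fun k => if k = a then 1 else 0) := by
    intro x hx y hy hr p a hap hlt
    have hw := iter_mono hmono hx hy hr (Wword C p a (x p)) (valid_W hC p a (x p))
    rwa [core_big hap hs1 hx rfl (hx p),
      core_small hap (hC a) hs1 hy hlt (hx p)] at hw
  -- existence of a coordinate distinct from any two given ones (uses I ≥ 3)
  have hfresh : ∀ u v : Fin I, ∃ w : Fin I, w ≠ u ∧ w ≠ v := by
    intro u v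
    have hcard : ({u, v} : Finset (Fin I)).card ≤ 2 := by
      calc ({u, v} : Finset (Fin I)).card ≤ ({v} : Finset (Fin I)).card + 1 :=
            Finset.card_insert_le u {v}
      _ ≤ 2 := by rw [Finset.card_singleton]
    have hne : (({u, v} : Finset (Fin I))ᶜ).Nonempty := by
      rw [← Finset.card_pos, Finset.card_compl, Fintype.card_fin]
      omega
    obtain ⟨w, hw⟩ := hne
    rw [Finset.mem_compl, Finset.mem_insert, Finset.mem_singleton] at hw
    push_neg at hw
    exact ⟨w, hw.1, hw.2⟩
  -- killing lemmas : r e_a 0 and r 0 e_a are both impossible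
  have killA : ∀ a : Fin I, r (fun k => if k = a then 1 else 0) (fun _ => 0) → False := by
    intro a hra
    obtain ⟨b, hba, -⟩ := hfresh a a
    obtain ⟨c, hcb, hca⟩ := hfresh b a
    have h1 : r (fun _ => 0) (fun k => if k = b then 1 else 0) :=
      stepB _ (heV a) _ h0X hra a b hba (by simp)
    have h2 : r (fun k => if k = c then 1 else 0) (fun _ => 0) :=
      stepA _ h0X _ (heV b) h1 b c hcb (by simp)
    have h3 : r (fun _ => 0) (fun k => if k = a then 1 else 0) :=
      stepB _ (heV c) _ h0X h2 c a (Ne.symm hca) (by simp)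
    have heq := hantisymm _ (heV a) _ h0X hra h3
    have := congrFun heq a
    simp at this
  have killB : ∀ a : Fin I, r (fun _ => 0) (fun k => if k = a then 1 else 0) → False := by
    intro a hra
    obtain ⟨b, hba, -⟩ := hfresh a a
    have h1 : r (fun k => if k = b then 1 else 0) (fun _ => 0) :=
      stepA _ h0X _ (heV a) hra a b hba (by simp)
    exact killA b h1
  intro x hx y hy
  constructor
  · intro hr
    by_contra hne
    have hp : ∃ p, x p ≠ y p := by
      by_contra h
      push_neg at h
      exact hne (funext h)
    obtain ⟨p, hp⟩ := hp
    obtain ⟨a, hap, -⟩ := hfresh p p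
    rcases Nat.lt_or_ge (x p) (y p) with hlt | hge
    · exact killA a (stepA x hx y hy hr p a hap hlt)
    · have hgt : y p < x p := by omega
      exact killB a (stepB x hx y hy hr p a hap hgt)
  · rintro rfl
    exact hrefl x hx


end ATO
end

section
/- Monotonicity of the supremum chain (Proposition 6.1): for every event a ∈ E and all x, y ∈ X with x ≤ y in the componentwise order, f̄(x, a) ≤ f̄(y, a). -/
open MeasureTheory Finset ENNReal

namespace ATO

/-- The detailed state space `N`: coordinates indexed by the nonempty subsets `A`
(the `∅` coordinate is forced to `0`), with `∑_{A ∋ i} n_A ≤ C_i` for every `i`. -/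
def Nspace {I : ℕ} (C : Fin I → ℕ) : Set (Finset (Fin I) → ℕ) :=
  {n | n ∅ = 0 ∧ ∀ i, (∑ A ∈ Finset.univ.filter (fun A => i ∈ A), n A) ≤ C i}

/-- The projection `ψ : N → X`, `ψ(n)_i = ∑_{A ∋ i} n_A`. -/
def psi {I : ℕ} (n : Finset (Fin I) → ℕ) : Fin I → ℕ :=
  fun i => ∑ A ∈ Finset.univ.filter (fun A => i ∈ A), n A

/-- The enumeration `A_k^i` of the subsets of `{i,…,I}` containing `i` (0-based indices):
an element `t > i` belongs to `A_k^i` iff the binary digit of `k` in position `I - 1 - t`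
vanishes. -/
def Aset {I : ℕ} (i : Fin I) (k : ℕ) : Finset (Fin I) :=
  Finset.univ.filter (fun t => t = i ∨ (i < t ∧ Nat.testBit k (I - 1 - t.val) = false))

/-- Partial sums `∑_{ℓ=0}^{k-1} n_{A_ℓ^i}`. -/
def psum {I : ℕ} (i : Fin I) (n : Finset (Fin I) → ℕ) (k : ℕ) : ℕ :=
  ∑ l ∈ Finset.range k, n (Aset i l)

/-- The transition function `f̃` of the detailed chain: a demand `d A` adds `ε_{A^{(n)}}`
where `A^{(n)} = {i ∈ A : ψ(n)_i < C_i}` (no change if `A^{(n)} = ∅`); a service `r_j^i`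
removes `ε_{A_k^i}` for the minimal `k` with `∑_{ℓ=0}^{k} n_{A_ℓ^i} ≥ j`, if
`∑_{ℓ} n_{A_ℓ^i} ≥ j`, and otherwise does nothing. -/
noncomputable def ftil {I : ℕ} (C : Fin I → ℕ) (n : Finset (Fin I) → ℕ) :
    Ev I → (Finset (Fin I) → ℕ)
  | .d A => fun B =>
      n B + if B = A.filter (fun i => psi n i < C i) ∧ B.Nonempty then 1 else 0
  | .s i j => fun B =>
      n B - if j ≤ psum i n (2 ^ (I - 1 - i.val))
              ∧ B = Aset i (sInf {k | j ≤ psum i n (k + 1)}) then 1 else 0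

/-- The supremum chain `f̄` on `X` (componentwise supremum over all detailed states
projecting to `x`). -/
noncomputable def fbar {I : ℕ} (C : Fin I → ℕ) (x : Fin I → ℕ) (a : Ev I) : Fin I → ℕ :=
  fun p => sSup ((fun n => psi (ftil C n a) p) '' {n | n ∈ Nspace C ∧ psi n = x})

/-- The infimum chain `f_inf` on `X` (componentwise infimum over all detailed states
projecting to `x`). -/
noncomputable def finf {I : ℕ} (C : Fin I → ℕ) (x : Fin I → ℕ) (a : Ev I) : Fin I → ℕ :=
  fun p => sInf ((fun n => psi (ftil C n a) p) '' {n | n ∈ Nspace C ∧ psi n = x})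

/-- One step of the aggregated envelope chain `F([m,M],a)`. -/
noncomputable def Fenv {I : ℕ} (C : Fin I → ℕ) (m M : Fin I → ℕ) (a : Ev I) :
    (Fin I → ℕ) × (Fin I → ℕ) :=
  (fun p => sInf ((fun x => finf C x a p) '' Set.Icc m M),
   fun p => sSup ((fun x => fbar C x a p) '' Set.Icc m M))

/-- Iteration of the aggregated envelope chain along a word (head applied first). -/
noncomputable def FenvIter {I : ℕ} (C : Fin I → ℕ) :
    (Fin I → ℕ) → (Fin I → ℕ) → List (Ev I) → (Fin I → ℕ) × (Fin I → ℕ)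
  | m, M, [] => (m, M)
  | m, M, a :: w => FenvIter C (Fenv C m M a).1 (Fenv C m M a).2 w

/-- The "hat" operation `x̂_i = max{x_i − (x_1 + ⋯ + x_{i-1}), 0}`. -/
def xhat {I : ℕ} (x : Fin I → ℕ) (i : Fin I) : ℕ :=
  x i - ∑ t ∈ Finset.univ.filter (fun t => t < i), x t

/-- The distribution `ν` on events: `ν (d A) = λ_A / Λ` and `ν (r_j^i) = μ / Λ`. -/
noncomputable def probJ {I : ℕ} (C : Fin I → ℕ) (lam : Finset (Fin I) → ℝ) (μv Λ : ℝ) :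
    Ev I → ℝ≥0∞
  | .d A => if A.Nonempty then ENNReal.ofReal (lam A / Λ) else 0
  | .s i j => if 1 ≤ j ∧ j ≤ C i then ENNReal.ofReal (μv / Λ) else 0

/-! A demand `d_A` acts on `ψ(n)` through `ψ(n)` alone:
`f̄(x, d_A) = x + ∑_{p ∈ A, x_p < C_p} e_p`. For a service `r_j^i`, the sets `A_k^i` enumerate
exactly the subsets of `{i,…,I}` containing `i`, and a state over `x` carries on them a total
mass of at least `x̂_i`, so coordinate `i` always drops when `j ≤ x̂_i`. Conversely, pairing the
units of `i` with units of smaller components as far as possible yields a state over `x` whose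
mass on these sets sits on `{i}` alone and equals `x̂_i`; it removes a unit from coordinate `i`
only, and only when `j ≤ x̂_i`. Hence `f̄(x, r_j^i) = x - 1_{j ≤ x̂_i} e_i`. Both closed forms
are monotone in `x`. -/

section

variable {I : ℕ}

lemma exists_le_sum_eq {α : Type*} (s : Finset α) (f : α → ℕ) {c : ℕ}
    (hc : c ≤ ∑ a ∈ s, f a) : ∃ g ≤ f, ∑ a ∈ s, g a = c := by
  classical
  induction s using Finset.induction_on generalizing c with
  | empty =>
    refine ⟨0, fun _ => Nat.zero_le _, ?_⟩
    simp only [sum_empty, Pi.zero_apply, sum_const_zero] at hc ⊢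
    omega
  | insert a s ha ih =>
    rw [sum_insert ha] at hc
    obtain ⟨g, hgf, hg⟩ := ih (c := c - f a) (by omega)
    refine ⟨Function.update g a (min c (f a)), fun b => ?_, ?_⟩
    · rcases eq_or_ne b a with rfl | hb
      · simp
      · simpa [hb] using hgf b
    · rw [sum_insert ha, Function.update_self,
        sum_congr rfl fun b hb => Function.update_of_ne (ne_of_mem_of_not_mem hb ha) _ _]
      omega

def highSets (i : Fin I) : Finset (Finset (Fin I)) := (Ioi i).powerset.image (insert i)

lemma mem_highSets {i : Fin I} {B : Finset (Fin I)} :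
    B ∈ highSets i ↔ i ∈ B ∧ ∀ t ∈ B, i ≤ t := by
  constructor
  · simp only [highSets, mem_image, mem_powerset]
    rintro ⟨D, hD, rfl⟩
    refine ⟨mem_insert_self i D, fun t ht => ?_⟩
    rcases mem_insert.1 ht with rfl | ht
    · exact le_rfl
    · exact (mem_Ioi.1 (hD ht)).le
  · rintro ⟨hiB, hB⟩
    refine mem_image.2 ⟨B.erase i, mem_powerset.2 fun t ht => ?_, insert_erase hiB⟩
    exact mem_Ioi.2 (lt_of_le_of_ne (hB t (mem_of_mem_erase ht)) (ne_of_mem_erase ht).symm)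

lemma card_highSets (i : Fin I) : #(highSets i) = 2 ^ (I - 1 - i) := by
  rw [highSets, card_image_of_injOn, card_powerset, Fin.card_Ioi]
  intro D hD D' hD' h
  have hi : ∀ E ∈ ((Ioi i).powerset : Set (Finset (Fin I))), i ∉ E := fun E hE hiE =>
    lt_irrefl i (mem_Ioi.1 (mem_powerset.1 hE hiE))
  rw [← erase_insert (hi D hD), ← erase_insert (hi D' hD')]
  exact congrArg (·.erase i) h

lemma Aset_mem_highSets (i : Fin I) (k : ℕ) : Aset i k ∈ highSets i := by
  refine mem_highSets.2 ⟨by simp [Aset], fun t ht => ?_⟩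
  rcases (mem_filter.1 ht).2 with rfl | ⟨hit, -⟩
  · exact le_rfl
  · exact hit.le

lemma Aset_injOn (i : Fin I) : Set.InjOn (Aset i) (range (2 ^ (I - 1 - i))) := by
  intro k hk l hl h
  simp only [coe_range, Set.mem_Iio] at hk hl
  refine Nat.eq_of_testBit_eq fun b => ?_
  by_cases hb : b < I - 1 - i
  · have ht : I - 1 - b < I := by omega
    have hit : i < ⟨I - 1 - b, ht⟩ := Fin.lt_def.2 (by dsimp only; omega)
    have key := congrArg (⟨I - 1 - b, ht⟩ ∈ ·) h
    simp only [Aset, mem_filter, mem_univ, true_and, hit, Fin.ne_of_gt hit,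
      false_or, eq_iff_iff] at key
    have hval : I - 1 - (I - 1 - b) = b := by omega
    rw [hval] at key
    cases hkb : k.testBit b <;> cases hlb : l.testBit b <;> simp_all
  · have hpow : 2 ^ (I - 1 - i) ≤ 2 ^ b := Nat.pow_le_pow_right two_pos (by omega)
    rw [Nat.testBit_lt_two_pow (hk.trans_le hpow), Nat.testBit_lt_two_pow (hl.trans_le hpow)]

lemma image_Aset (i : Fin I) : (range (2 ^ (I - 1 - i))).image (Aset i) = highSets i :=
  eq_of_subset_of_card_le (image_subset_iff.2 fun k _ => Aset_mem_highSets i k) <| by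
    rw [card_highSets, card_image_of_injOn (Aset_injOn i), card_range]

lemma psum_eq_sum_highSets (i : Fin I) (n : Finset (Fin I) → ℕ) :
    psum i n (2 ^ (I - 1 - i)) = ∑ B ∈ highSets i, n B := by
  rw [← image_Aset, sum_image (Aset_injOn i), psum]

lemma sum_filter_mem_ite_and_eq (p : Fin I) (D : Finset (Fin I)) (P : Prop) [Decidable P] :
    ∑ B ∈ univ.filter (fun B => p ∈ B), (if P ∧ B = D then 1 else 0) =
      if P ∧ p ∈ D then 1 else 0 := by
  by_cases hP : P <;> simp [hP, sum_ite_eq']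

lemma psi_ftil_demand (C : Fin I → ℕ) (n : Finset (Fin I) → ℕ) (A : Finset (Fin I))
    (p : Fin I) :
    psi (ftil C n (.d A)) p = psi n p + if p ∈ A ∧ psi n p < C p then 1 else 0 := by
  set D := A.filter fun i => psi n i < C i
  have hcond : ∀ B : Finset (Fin I), (B = D ∧ B.Nonempty) ↔ (D.Nonempty ∧ B = D) := by
    rintro B; constructor
    · rintro ⟨rfl, h⟩; exact ⟨h, rfl⟩
    · rintro ⟨h, rfl⟩; exact ⟨rfl, h⟩
  have hmem : D.Nonempty ∧ p ∈ D ↔ p ∈ A ∧ psi n p < C p :=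
    ⟨fun h => mem_filter.1 h.2, fun h => ⟨⟨p, mem_filter.2 h⟩, mem_filter.2 h⟩⟩
  change ∑ B ∈ _, (n B + if B = D ∧ B.Nonempty then 1 else 0) = _
  simp_rw [hcond]
  rw [sum_add_distrib, sum_filter_mem_ite_and_eq, if_congr hmem rfl rfl]
  rfl

noncomputable def serviceIndex (i : Fin I) (n : Finset (Fin I) → ℕ) (j : ℕ) : ℕ :=
  sInf {k | j ≤ psum i n (k + 1)}

lemma le_psum_serviceIndex_succ {i : Fin I} {n : Finset (Fin I) → ℕ} {j : ℕ}
    (hc : j ≤ psum i n (2 ^ (I - 1 - i))) : j ≤ psum i n (serviceIndex i n j + 1) := by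
  have hpow : 1 ≤ 2 ^ (I - 1 - i) := Nat.one_le_two_pow
  have hmem : 2 ^ (I - 1 - i) - 1 ∈ {k | j ≤ psum i n (k + 1)} := by
    simpa [Nat.sub_add_cancel hpow] using hc
  exact Nat.sInf_mem ⟨_, hmem⟩

lemma psum_serviceIndex_lt {i : Fin I} {n : Finset (Fin I) → ℕ} {j : ℕ} (hj : 1 ≤ j) :
    psum i n (serviceIndex i n j) < j := by
  rcases hk : serviceIndex i n j with _ | k
  · simp only [psum, range_zero, sum_empty]; omega
  · have : k ∉ {k | j ≤ psum i n (k + 1)} := Nat.notMem_of_lt_sInf (by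
      rw [← serviceIndex, hk]; omega)
    simpa using this

lemma one_le_apply_Aset_serviceIndex {i : Fin I} {n : Finset (Fin I) → ℕ} {j : ℕ}
    (hj : 1 ≤ j) (hc : j ≤ psum i n (2 ^ (I - 1 - i))) : 1 ≤ n (Aset i (serviceIndex i n j)) := by
  have h := le_psum_serviceIndex_succ hc
  rw [psum, sum_range_succ, ← psum] at h
  have := psum_serviceIndex_lt (i := i) (n := n) hj
  omega

lemma psi_ftil_service (C : Fin I → ℕ) (n : Finset (Fin I) → ℕ) (i : Fin I) {j : ℕ}
    (hj : 1 ≤ j) (p : Fin I) :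
    psi (ftil C n (.s i j)) p = psi n p -
      if j ≤ psum i n (2 ^ (I - 1 - i)) ∧ p ∈ Aset i (serviceIndex i n j) then 1 else 0 := by
  rw [← sum_filter_mem_ite_and_eq]
  refine sum_tsub_distrib _ fun B _ => ?_
  split_ifs with h
  · rw [h.2]; exact one_le_apply_Aset_serviceIndex hj h.1
  · exact Nat.zero_le _

lemma psi_ftil_le_succ (C : Fin I → ℕ) (n : Finset (Fin I) → ℕ) (a : Ev I) (p : Fin I) :
    psi (ftil C n a) p ≤ psi n p + 1 := by
  cases a with
  | d A => rw [psi_ftil_demand]; split_ifs <;> omega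
  | s i j => exact (sum_le_sum fun B _ => Nat.sub_le _ _).trans (Nat.le_succ _)

lemma fbar_le_of_forall {C : Fin I → ℕ} {x : Fin I → ℕ} {a : Ev I} {p : Fin I} {b : ℕ}
    (h : ∀ n ∈ Nspace C, psi n = x → psi (ftil C n a) p ≤ b) : fbar C x a p ≤ b :=
  csSup_le' <| by rintro _ ⟨n, ⟨hn, hnx⟩, rfl⟩; exact h n hn hnx

lemma le_fbar {C : Fin I → ℕ} {n : Finset (Fin I) → ℕ} (hn : n ∈ Nspace C) (a : Ev I)
    (p : Fin I) : psi (ftil C n a) p ≤ fbar C (psi n) a p := by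
  refine le_csSup ⟨psi n p + 1, ?_⟩ ⟨n, ⟨hn, rfl⟩, rfl⟩
  rintro _ ⟨m, ⟨-, hm⟩, rfl⟩
  rw [← hm]
  exact psi_ftil_le_succ C m a p

lemma psi_le_psum_add (n : Finset (Fin I) → ℕ) (i : Fin I) :
    psi n i ≤ psum i n (2 ^ (I - 1 - i)) + ∑ t ∈ univ.filter (· < i), psi n t := by
  calc psi n i = ∑ B, if i ∈ B then n B else 0 := sum_filter _ _
    _ ≤ ∑ B, ((if B ∈ highSets i then n B else 0) +
          ∑ t ∈ univ.filter (· < i), if t ∈ B then n B else 0) := by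
      refine sum_le_sum fun B _ => ?_
      by_cases hB : B ∈ highSets i
      · simp only [if_pos hB]; split_ifs <;> omega
      by_cases hiB : i ∈ B
      · obtain ⟨t, htB, hti⟩ : ∃ t ∈ B, t < i := by simpa [mem_highSets, hiB] using hB
        rw [if_pos hiB, if_neg hB, zero_add]
        exact (if_pos htB).symm.trans_le <|
          single_le_sum (f := fun t => if t ∈ B then n B else 0) (fun _ _ => Nat.zero_le _)
            (by simpa using hti)
      · simp [hiB]
    _ = psum i n (2 ^ (I - 1 - i)) + ∑ t ∈ univ.filter (· < i), psi n t := by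
      rw [sum_add_distrib, sum_ite_mem, univ_inter, psum_eq_sum_highSets, sum_comm]
      exact congrArg _ (sum_congr rfl fun t _ => (sum_filter _ _).symm)

lemma psi_single (B : Finset (Fin I)) (c : ℕ) (p : Fin I) :
    psi (Pi.single B c) p = if p ∈ B then c else 0 := by
  simp [psi, Pi.single_apply, sum_ite_eq']

lemma psi_add (n n' : Finset (Fin I) → ℕ) (p : Fin I) : psi (n + n') p = psi n p + psi n' p :=
  sum_add_distrib

lemma psi_sum {ι : Type*} (s : Finset ι) (n : ι → Finset (Fin I) → ℕ) (p : Fin I) :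
    psi (∑ k ∈ s, n k) p = ∑ k ∈ s, psi (n k) p := by
  simp only [psi, Finset.sum_apply]
  exact sum_comm

lemma exists_fiber_highSets_eq {C y : Fin I → ℕ} (hy : y ∈ Xspace C) (i : Fin I) :
    ∃ n ∈ Nspace C, psi n = y ∧
      ∀ B ∈ highSets i, n B = if B = {i} then xhat y i else 0 := by
  obtain ⟨m, hmy, hm⟩ := exists_le_sum_eq univ (fun t => if t < i then y t else 0)
    (c := min (∑ t ∈ univ.filter (· < i), y t) (y i)) (by simp [sum_filter])
  have hm_lt : ∀ t, ¬ t < i → m t = 0 := fun t ht => by simpa [ht] using hmy t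
  have hm_le : ∀ t, m t ≤ y t := fun t => (hmy t).trans (by dsimp only; split_ifs <;> omega)
  set r : Fin I → ℕ := Function.update (y - m) i (xhat y i)
  set n : Finset (Fin I) → ℕ :=
    ∑ t, Pi.single {t} (r t) + ∑ t ∈ univ.erase i, Pi.single {t, i} (m t)
  have hpsi : psi n = y := by
    funext p
    simp only [n, psi_add, psi_sum, psi_single, mem_singleton, mem_insert]
    by_cases hp : p = i
    · subst hp
      simp only [r, or_true, if_true, sum_ite_eq, mem_univ, Function.update_self]
      rw [sum_erase univ (hm_lt p (lt_irrefl p)), hm, xhat]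
      omega
    · simpa [r, hp] using Nat.sub_add_cancel (hm_le p)
  refine ⟨n, ⟨?_, fun t => (congrFun hpsi t).trans_le (hy t)⟩, hpsi, fun B hB => ?_⟩
  · simp [n, Finset.sum_apply]
  · obtain ⟨hiB, hge⟩ := mem_highSets.1 hB
    have hsingle : ∀ t ≠ i, B ≠ {t} := fun t ht hBt =>
      ht (mem_singleton.1 (hBt ▸ hiB)).symm
    have hpair : ∀ t, B = {t, i} → m t = 0 := fun t hBt =>
      hm_lt t (not_lt.2 (hge t (hBt ▸ mem_insert_self t _)))
    simp only [n, Pi.add_apply, Finset.sum_apply, Pi.single_apply]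
    rw [sum_eq_single i (fun t _ ht => if_neg (hsingle t ht)) (by simp),
      sum_eq_zero fun t _ => by split_ifs with h <;> simp [hpair t, h]]
    simp [r]

def demandStep (C : Fin I → ℕ) (A : Finset (Fin I)) (x : Fin I → ℕ) : Fin I → ℕ :=
  fun p => x p + if p ∈ A ∧ x p < C p then 1 else 0

def serviceStep (i : Fin I) (j : ℕ) (x : Fin I → ℕ) : Fin I → ℕ :=
  fun p => x p - if p = i ∧ j ≤ xhat x i then 1 else 0

lemma monotone_demandStep (C : Fin I → ℕ) (A : Finset (Fin I)) :
    Monotone (demandStep C A) := fun x y hxy p => by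
  have hxyp : x p ≤ y p := hxy p
  by_cases hpA : p ∈ A <;> simp only [demandStep, hpA, true_and, false_and, if_false]
  · split_ifs <;> omega
  · exact hxyp

lemma monotone_serviceStep (i : Fin I) (j : ℕ) : Monotone (serviceStep i j) := fun x y hxy p => by
  simp only [serviceStep]
  by_cases hp : p = i
  · subst hp
    have hsum : ∑ t ∈ univ.filter (· < p), x t ≤ ∑ t ∈ univ.filter (· < p), y t :=
      sum_le_sum fun t _ => hxy t
    have hxyp : x p ≤ y p := hxy p
    simp only [true_and, xhat]
    split_ifs <;> omega
  · simpa [hp] using hxy p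

lemma fbar_demand_le (C x : Fin I → ℕ) (A : Finset (Fin I)) :
    fbar C x (.d A) ≤ demandStep C A x := fun p =>
  fbar_le_of_forall fun n _ hnx => by rw [psi_ftil_demand, hnx]; rfl

lemma demandStep_le_fbar {C y : Fin I → ℕ} (hy : y ∈ Xspace C) (A : Finset (Fin I)) :
    demandStep C A y ≤ fbar C y (.d A) := fun p => by
  obtain ⟨n, hn, rfl, -⟩ := exists_fiber_highSets_eq hy p
  rw [demandStep, ← psi_ftil_demand]
  exact le_fbar hn _ p

lemma fbar_service_le (C x : Fin I → ℕ) (i : Fin I) {j : ℕ} (hj : 1 ≤ j) :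
    fbar C x (.s i j) ≤ serviceStep i j x := fun p =>
  fbar_le_of_forall fun n _ hnx => by
    subst hnx
    rw [psi_ftil_service C n i hj, serviceStep]
    by_cases h : p = i ∧ j ≤ xhat (psi n) i
    · obtain ⟨rfl, hjx⟩ := h
      have := psi_le_psum_add n p
      have hc : j ≤ psum p n (2 ^ (I - 1 - p)) := by rw [xhat] at hjx; omega
      simp [hjx, hc, Aset]
    · rw [if_neg h]
      exact Nat.sub_le _ _

lemma serviceStep_le_fbar {C y : Fin I → ℕ} (hy : y ∈ Xspace C) (i : Fin I) {j : ℕ}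
    (hj : 1 ≤ j) : serviceStep i j y ≤ fbar C y (.s i j) := fun p => by
  obtain ⟨n, hn, rfl, hhigh⟩ := exists_fiber_highSets_eq hy i
  refine le_of_eq_of_le ?_ (le_fbar hn _ p)
  have hpsum : psum i n (2 ^ (I - 1 - i)) = xhat (psi n) i := by
    rw [psum_eq_sum_highSets, sum_congr rfl hhigh, sum_ite_eq']
    simp [mem_highSets]
  rw [psi_ftil_service C n i hj, serviceStep, hpsum]
  by_cases hc : j ≤ xhat (psi n) i
  · have hK : Aset i (serviceIndex i n j) = {i} := by
      by_contra hne
      have := one_le_apply_Aset_serviceIndex hj (hpsum ▸ hc)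
      rw [hhigh _ (Aset_mem_highSets _ _), if_neg hne] at this
      omega
    simp [hc, hK]
  · simp [hc]

end

theorem stmt12_general (I : ℕ) (C : Fin I → ℕ)
    (a : Ev I) (ha : ValidEv C a)
    (x y : Fin I → ℕ) (hy : y ∈ Xspace C) (hxy : x ≤ y) :
    fbar C x a ≤ fbar C y a := by
  cases a with
  | d A =>
    exact (fbar_demand_le C x A).trans
      ((monotone_demandStep C A hxy).trans (demandStep_le_fbar hy A))
  | s i j =>
    obtain ⟨hj, -⟩ := ha
    exact (fbar_service_le C x i hj).trans
      ((monotone_serviceStep i j hxy).trans (serviceStep_le_fbar hy i hj))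

/-- Proposition 6.1: monotonicity of the supremum chain. -/
theorem stmt12 (I : ℕ) (hI : 1 ≤ I) (C : Fin I → ℕ) (hC : ∀ i, 1 ≤ C i)
    (a : Ev I) (ha : ValidEv C a)
    (x y : Fin I → ℕ) (hx : x ∈ Xspace C) (hy : y ∈ Xspace C) (hxy : x ≤ y) :
    fbar C x a ≤ fbar C y a :=
  stmt12_general I C a ha x y hy hxy

end ATO
end

section
/- Transition function of the infimum chain (Lemma 6.3): for every x ∈ X, every i ∈ {1,…,I}, every 1 ≤ j ≤ C_i, and every p ∈ {1,…,I}, the p-th component of f_inf(x, r_j^i) equals: x_p if p < i; x_i − 1{j ≤ x_i} if p = i; and x_p − 1{x_p > 0 and j ≤ min(Σ_{i'=i+1}^{p} x_{i'}, x_i)} if p > i. Moreover, for every nonempty A ⊆ {1,…,I}, f_inf(x, d_A) = f̄(x, d_A) = x + Σ_{k∈A} 1{x_k < C_k} e_k. -/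
open MeasureTheory Finset ENNReal

namespace ATO

/-! ### Auxiliary lemmas -/

section Aux

variable {I : ℕ}

lemma testBit_pred_sub_pow {m b : ℕ} (hb : b < m) (c : ℕ) :
    Nat.testBit (2 ^ m - 1 - 2 ^ b) c = (decide (c < m) && !decide (c = b)) := by
  have h4 : 1 ≤ 2 ^ (m - b - 1) := Nat.one_le_two_pow
  have h2 : 1 ≤ 2 ^ b := Nat.one_le_two_pow
  have h5 : 2 ^ b < 2 ^ m := Nat.pow_lt_pow_right one_lt_two hb
  have h3 : 2 ^ (b + 1) = 2 ^ b + 2 ^ b := by rw [pow_succ]; omega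
  have hX : 2 ^ (b + 1) * (2 ^ (m - b - 1) - 1) + 2 ^ (b + 1) = 2 ^ m := by
    rw [← Nat.mul_succ, Nat.succ_eq_add_one, Nat.sub_add_cancel h4, ← pow_add]
    congr 1; omega
  have key : 2 ^ m - 1 - 2 ^ b = 2 ^ (b + 1) * (2 ^ (m - b - 1) - 1) + (2 ^ b - 1) := by
    omega
  rw [key, Nat.testBit_two_pow_mul_add _ (show 2 ^ b - 1 < 2 ^ (b + 1) by omega)]
  by_cases h1 : c < b + 1
  · rw [if_pos h1, Nat.testBit_two_pow_sub_one]
    by_cases hcb : c = b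
    · subst hcb; simp
    · have h6 : c < b := by omega
      simp [h6, hcb, show c < m by omega]
  · rw [if_neg h1, Nat.testBit_two_pow_sub_one]
    have hcb : c ≠ b := by omega
    by_cases h7 : c < m
    · simp [hcb, h7, show c - (b + 1) < m - b - 1 by omega]
    · simp [hcb, h7, show ¬(c - (b + 1) < m - b - 1) by omega]

lemma testBit_pow_sub_pow {m b : ℕ} (hb : b ≤ m) (c : ℕ) :
    Nat.testBit (2 ^ m - 2 ^ b) c = (decide (b ≤ c) && decide (c < m)) := by
  have h4 : 1 ≤ 2 ^ (m - b) := Nat.one_le_two_pow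
  have hX : 2 ^ b * (2 ^ (m - b) - 1) + 2 ^ b = 2 ^ m := by
    rw [← Nat.mul_succ, Nat.succ_eq_add_one, Nat.sub_add_cancel h4, ← pow_add]
    congr 1; omega
  have key : 2 ^ m - 2 ^ b = 2 ^ b * (2 ^ (m - b) - 1) + 0 := by omega
  rw [key, Nat.testBit_two_pow_mul_add _ (Nat.two_pow_pos b)]
  by_cases h1 : c < b
  · simp [h1, show ¬ b ≤ c by omega]
  · rw [if_neg h1, Nat.testBit_two_pow_sub_one]
    by_cases h2 : c < m
    · simp [h2, show b ≤ c by omega, show c - b < m - b by omega]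
    · simp [h2, show ¬(c - b < m - b) by omega]

lemma mem_Aset {i t : Fin I} {k : ℕ} :
    t ∈ Aset i k ↔ (t = i ∨ (i < t ∧ Nat.testBit k (I - 1 - t.val) = false)) := by
  simp [Aset]

lemma self_mem_Aset (i : Fin I) (k : ℕ) : i ∈ Aset i k := mem_Aset.2 (Or.inl rfl)

lemma Aset_inj {i : Fin I} {k k' : ℕ} (hk : k < 2 ^ (I - 1 - i.val))
    (hk' : k' < 2 ^ (I - 1 - i.val)) (h : Aset i k = Aset i k') : k = k' := by
  have hI : i.val < I := i.isLt
  apply Nat.eq_of_testBit_eq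
  intro c
  by_cases hc : c < I - 1 - i.val
  · set t : Fin I := ⟨I - 1 - c, by omega⟩ with ht
    have hit : i < t := by rw [Fin.lt_def]; simp only [ht]; omega
    have hc' : I - 1 - t.val = c := by simp only [ht]; omega
    have e1 : (t ∈ Aset i k) ↔ (Nat.testBit k c = false) := by
      rw [mem_Aset, hc']
      simp [hit.ne', hit]
    have e2 : (t ∈ Aset i k') ↔ (Nat.testBit k' c = false) := by
      rw [mem_Aset, hc']
      simp [hit.ne', hit]
    have e3 : Nat.testBit k c = false ↔ Nat.testBit k' c = false := by
      rw [← e1, ← e2, h]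
    cases hbk : Nat.testBit k c <;> cases hbk' : Nat.testBit k' c <;> simp_all
  · have hck : Nat.testBit k c = false :=
      Nat.testBit_lt_two_pow
        (lt_of_lt_of_le hk (Nat.pow_le_pow_right (by norm_num) (by omega)))
    have hck' : Nat.testBit k' c = false :=
      Nat.testBit_lt_two_pow
        (lt_of_lt_of_le hk' (Nat.pow_le_pow_right (by norm_num) (by omega)))
    rw [hck, hck']

lemma Aset_top (i : Fin I) : Aset i (2 ^ (I - 1 - i.val) - 1) = {i} := by
  have hI := i.isLt
  ext t
  have hT := t.isLt
  simp only [mem_Aset, Finset.mem_singleton, Nat.testBit_two_pow_sub_one]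
  constructor
  · rintro (h | ⟨hit, hb⟩)
    · exact h
    · exfalso
      rw [Fin.lt_def] at hit
      rw [decide_eq_false_iff_not] at hb
      omega
  · intro h; exact Or.inl h

lemma Aset_pair {i p : Fin I} (hip : i < p) :
    Aset i (2 ^ (I - 1 - i.val) - 1 - 2 ^ (I - 1 - p.val)) = {i, p} := by
  have hI := i.isLt; have hP := p.isLt
  have hb : I - 1 - p.val < I - 1 - i.val := by rw [Fin.lt_def] at hip; omega
  ext t
  have hT := t.isLt
  simp only [mem_Aset, Finset.mem_insert, Finset.mem_singleton, testBit_pred_sub_pow hb]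
  constructor
  · rintro (rfl | ⟨hit, hbit⟩)
    · exact Or.inl rfl
    · right
      have h1 : I - 1 - t.val < I - 1 - i.val := by rw [Fin.lt_def] at hit; omega
      have h2 : I - 1 - t.val = I - 1 - p.val := by
        by_contra hne
        simp [h1, hne] at hbit
      rw [Fin.lt_def] at hit
      exact Fin.ext (by omega)
  · rintro (rfl | rfl)
    · exact Or.inl rfl
    · exact Or.inr ⟨hip, by simp⟩

lemma Aset_lt_of_disjoint {i p : Fin I} (hip : i < p) {k l : ℕ}
    (hk : k < 2 ^ (I - 1 - i.val)) (hl : l < 2 ^ (I - 1 - i.val))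
    (hpk : p ∈ Aset i k) (hdis : ∀ t : Fin I, i < t → t ≤ p → t ∉ Aset i l) : k < l := by
  have hI := i.isLt; have hP := p.isLt
  have hb : I - 1 - p.val < I - 1 - i.val := by rw [Fin.lt_def] at hip; omega
  have hup : k ≤ 2 ^ (I - 1 - i.val) - 1 - 2 ^ (I - 1 - p.val) := by
    apply Nat.le_of_testBit
    intro c hc
    rw [testBit_pred_sub_pow hb]
    have hcm : c < I - 1 - i.val := by
      by_contra h
      rw [Nat.testBit_lt_two_pow
        (lt_of_lt_of_le hk (Nat.pow_le_pow_right (by norm_num) (by omega)))] at hc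
      exact Bool.noConfusion hc
    have hcb : c ≠ I - 1 - p.val := by
      rintro rfl
      rcases mem_Aset.1 hpk with h | ⟨-, hbit⟩
      · exact absurd h hip.ne'
      · rw [hbit] at hc; exact Bool.noConfusion hc
    simp [hcm, hcb]
  have hlow : 2 ^ (I - 1 - i.val) - 2 ^ (I - 1 - p.val) ≤ l := by
    apply Nat.le_of_testBit
    intro c hc
    rw [testBit_pow_sub_pow (le_of_lt hb)] at hc
    have hc1 : (I - 1 - p.val) ≤ c ∧ c < I - 1 - i.val := by simpa using hc
    set t : Fin I := ⟨I - 1 - c, by omega⟩ with ht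
    have hit : i < t := by rw [Fin.lt_def]; simp only [ht]; omega
    have htp : t ≤ p := by rw [Fin.le_def]; simp only [ht]; omega
    have hnot := hdis t hit htp
    rw [mem_Aset] at hnot
    push_neg at hnot
    have hbit : Nat.testBit l (I - 1 - t.val) = true := by
      have := hnot.2 hit
      simpa using this
    have hct : I - 1 - t.val = c := by simp only [ht]; omega
    rwa [hct] at hbit
  have h1 : 1 ≤ 2 ^ (I - 1 - p.val) := Nat.one_le_two_pow
  have h2 : 2 ^ (I - 1 - p.val) < 2 ^ (I - 1 - i.val) :=
    Nat.pow_lt_pow_right one_lt_two hb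
  omega

end Aux

section Aux2

variable {I : ℕ}

lemma psum_mono {i : Fin I} (n : Finset (Fin I) → ℕ) {k k' : ℕ} (h : k ≤ k') :
    psum i n k ≤ psum i n k' :=
  Finset.sum_le_sum_of_subset (Finset.range_subset_range.2 h)

lemma psum_succ {i : Fin I} (n : Finset (Fin I) → ℕ) (k : ℕ) :
    psum i n (k + 1) = psum i n k + n (Aset i k) :=
  Finset.sum_range_succ _ _

lemma psum_le_psi {i : Fin I} (n : Finset (Fin I) → ℕ) :
    psum i n (2 ^ (I - 1 - i.val)) ≤ psi n i := by
  have hinj : ∀ l1 ∈ Finset.range (2 ^ (I - 1 - i.val)),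
      ∀ l2 ∈ Finset.range (2 ^ (I - 1 - i.val)), Aset i l1 = Aset i l2 → l1 = l2 :=
    fun l1 h1 l2 h2 h => Aset_inj (Finset.mem_range.1 h1) (Finset.mem_range.1 h2) h
  calc psum i n (2 ^ (I - 1 - i.val))
      = ∑ A ∈ (Finset.range (2 ^ (I - 1 - i.val))).image (Aset i), n A :=
        (Finset.sum_image hinj).symm
    _ ≤ ∑ A ∈ Finset.univ.filter (fun A => i ∈ A), n A := by
        apply Finset.sum_le_sum_of_subset
        intro A hA
        obtain ⟨l, -, rfl⟩ := Finset.mem_image.1 hA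
        exact Finset.mem_filter.2 ⟨Finset.mem_univ _, self_mem_Aset i l⟩
    _ = psi n i := rfl

lemma psum_le_sum_Ioc {i p : Fin I} (hip : i < p) (n : Finset (Fin I) → ℕ) {k0 : ℕ}
    (hk0 : k0 < 2 ^ (I - 1 - i.val)) (hpk : p ∈ Aset i k0) :
    psum i n (k0 + 1) ≤ ∑ t ∈ Finset.univ.filter (fun t => i < t ∧ t ≤ p), psi n t := by
  have hinj : ∀ l1 ∈ Finset.range (k0 + 1),
      ∀ l2 ∈ Finset.range (k0 + 1), Aset i l1 = Aset i l2 → l1 = l2 := by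
    intro l1 h1 l2 h2 h
    exact Aset_inj (by have := Finset.mem_range.1 h1; omega)
      (by have := Finset.mem_range.1 h2; omega) h
  set s := Finset.univ.filter (fun t : Fin I => i < t ∧ t ≤ p) with hs
  calc psum i n (k0 + 1)
      = ∑ A ∈ (Finset.range (k0 + 1)).image (Aset i), n A := (Finset.sum_image hinj).symm
    _ ≤ ∑ A ∈ (Finset.range (k0 + 1)).image (Aset i),
          ∑ t ∈ s, (if t ∈ A then n A else 0) := by
        apply Finset.sum_le_sum
        intro A hA
        obtain ⟨l, hl, rfl⟩ := Finset.mem_image.1 hA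
        have hl' : l < k0 + 1 := Finset.mem_range.1 hl
        have hex : ∃ t ∈ s, t ∈ Aset i l := by
          by_contra hno
          push_neg at hno
          have : k0 < l := by
            apply Aset_lt_of_disjoint hip hk0 (by omega) hpk
            intro t h1 h2
            exact hno t (Finset.mem_filter.2 ⟨Finset.mem_univ _, h1, h2⟩)
          omega
        obtain ⟨t0, ht0s, ht0⟩ := hex
        have := Finset.single_le_sum
          (f := fun t => if t ∈ Aset i l then n (Aset i l) else 0)
          (fun _ _ => Nat.zero_le _) ht0s
        simpa [ht0] using this
    _ ≤ ∑ A ∈ (Finset.univ : Finset (Finset (Fin I))),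
          ∑ t ∈ s, (if t ∈ A then n A else 0) :=
        Finset.sum_le_sum_of_subset (Finset.subset_univ _)
    _ = ∑ t ∈ s, ∑ A ∈ (Finset.univ : Finset (Finset (Fin I))),
          (if t ∈ A then n A else 0) := Finset.sum_comm
    _ = ∑ t ∈ s, psi n t := by
        refine Finset.sum_congr rfl fun t _ => ?_
        rw [psi, Finset.sum_filter]

lemma step_facts {i : Fin I} {n : Finset (Fin I) → ℕ} {j : ℕ} (hj : 1 ≤ j)
    (hstep : j ≤ psum i n (2 ^ (I - 1 - i.val))) :
    sInf {k | j ≤ psum i n (k + 1)} < 2 ^ (I - 1 - i.val)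
    ∧ j ≤ psum i n (sInf {k | j ≤ psum i n (k + 1)} + 1)
    ∧ psum i n (sInf {k | j ≤ psum i n (k + 1)}) < j
    ∧ 1 ≤ n (Aset i (sInf {k | j ≤ psum i n (k + 1)})) := by
  have hM : 1 ≤ 2 ^ (I - 1 - i.val) := Nat.one_le_two_pow
  have hmem : (2 ^ (I - 1 - i.val) - 1) ∈ {k | j ≤ psum i n (k + 1)} := by
    simp only [Set.mem_setOf_eq]
    rwa [Nat.sub_add_cancel hM]
  have hne : {k | j ≤ psum i n (k + 1)}.Nonempty := ⟨_, hmem⟩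
  have h1 := Nat.sInf_mem hne
  simp only [Set.mem_setOf_eq] at h1
  have h2 : sInf {k | j ≤ psum i n (k + 1)} ≤ 2 ^ (I - 1 - i.val) - 1 := Nat.sInf_le hmem
  have h3 : psum i n (sInf {k | j ≤ psum i n (k + 1)}) < j := by
    rcases Nat.eq_zero_or_pos (sInf {k | j ≤ psum i n (k + 1)}) with h | h
    · rw [h]
      have : psum i n 0 = 0 := by simp [psum]
      omega
    · have hnm := Nat.notMem_of_lt_sInf
        (show sInf {k | j ≤ psum i n (k + 1)} - 1 < sInf {k | j ≤ psum i n (k + 1)} by omega)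
      simp only [Set.mem_setOf_eq, not_le] at hnm
      rwa [Nat.sub_add_cancel h] at hnm
  have h4 := psum_succ (i := i) n (sInf {k | j ≤ psum i n (k + 1)})
  exact ⟨by omega, h1, h3, by omega⟩

lemma psi_ftil_s {C : Fin I → ℕ} {n : Finset (Fin I) → ℕ} {i : Fin I} {j : ℕ}
    (hj : 1 ≤ j) (p : Fin I) :
    psi (ftil C n (.s i j)) p =
      psi n p - if (j ≤ psum i n (2 ^ (I - 1 - i.val))
          ∧ p ∈ Aset i (sInf {k | j ≤ psum i n (k + 1)})) then 1 else 0 := by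
  have hftil : ∀ B, ftil C n (.s i j) B
      = n B - if (j ≤ psum i n (2 ^ (I - 1 - i.val))
          ∧ B = Aset i (sInf {k | j ≤ psum i n (k + 1)})) then 1 else 0 := fun B => rfl
  have hle : ∀ A ∈ Finset.univ.filter (fun A => p ∈ A),
      (if (j ≤ psum i n (2 ^ (I - 1 - i.val))
          ∧ A = Aset i (sInf {k | j ≤ psum i n (k + 1)})) then 1 else 0) ≤ n A := by
    intro A _
    split_ifs with h
    · rcases h with ⟨hc, rfl⟩
      exact (step_facts hj hc).2.2.2
    · exact Nat.zero_le _
  have hesum : ∑ A ∈ Finset.univ.filter (fun A => p ∈ A),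
      (if (j ≤ psum i n (2 ^ (I - 1 - i.val))
          ∧ A = Aset i (sInf {k | j ≤ psum i n (k + 1)})) then 1 else 0)
      = if (j ≤ psum i n (2 ^ (I - 1 - i.val))
          ∧ p ∈ Aset i (sInf {k | j ≤ psum i n (k + 1)})) then 1 else 0 := by
    by_cases hc : j ≤ psum i n (2 ^ (I - 1 - i.val))
    · simp only [hc, true_and]
      rw [Finset.sum_ite_eq' (Finset.univ.filter (fun A => p ∈ A))
        (Aset i (sInf {k | j ≤ psum i n (k + 1)})) (fun _ => 1)]
      by_cases hp : p ∈ Aset i (sInf {k | j ≤ psum i n (k + 1)})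
      · simp [Finset.mem_filter, hp]
      · simp [Finset.mem_filter, hp]
    · simp [hc]
  calc psi (ftil C n (.s i j)) p
      = ∑ A ∈ Finset.univ.filter (fun A => p ∈ A),
          (n A - if (j ≤ psum i n (2 ^ (I - 1 - i.val))
            ∧ A = Aset i (sInf {k | j ≤ psum i n (k + 1)})) then 1 else 0) := by
        refine Finset.sum_congr rfl fun A _ => ?_
        rw [hftil]
    _ = psi n p - if (j ≤ psum i n (2 ^ (I - 1 - i.val))
          ∧ p ∈ Aset i (sInf {k | j ≤ psum i n (k + 1)})) then 1 else 0 := by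
        rw [Finset.sum_tsub_distrib _ hle, hesum]; rfl

lemma psi_ftil_d {C : Fin I → ℕ} {n : Finset (Fin I) → ℕ} {A : Finset (Fin I)} (p : Fin I) :
    psi (ftil C n (.d A)) p = psi n p + if (p ∈ A ∧ psi n p < C p) then 1 else 0 := by
  set S := A.filter (fun t => psi n t < C t) with hS
  have h0 : psi (ftil C n (.d A)) p
      = ∑ B ∈ Finset.univ.filter (fun B => p ∈ B),
          (n B + if (B = S ∧ B.Nonempty) then 1 else 0) := rfl
  rw [h0, Finset.sum_add_distrib]
  have h1 : (∑ B ∈ Finset.univ.filter (fun B => p ∈ B), n B) = psi n p := rfl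
  rw [h1]
  congr 1
  have hterm : ∀ B : Finset (Fin I),
      (if (B = S ∧ B.Nonempty) then (1 : ℕ) else 0)
      = if B = S then (if S.Nonempty then 1 else 0) else 0 := by
    intro B
    by_cases h : B = S
    · subst h; simp
    · simp [h]
  rw [Finset.sum_congr rfl (fun B _ => hterm B),
    Finset.sum_ite_eq' (Finset.univ.filter (fun B => p ∈ B)) S
      (fun _ => if S.Nonempty then 1 else 0)]
  by_cases hps : p ∈ S
  · have hpA : p ∈ A ∧ psi n p < C p := by
      have := Finset.mem_filter.1 hps
      exact ⟨this.1, this.2⟩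
    have hne : S.Nonempty := ⟨p, hps⟩
    simp [Finset.mem_filter, hps, hne, hpA]
  · have hpA : ¬(p ∈ A ∧ psi n p < C p) := fun hc => hps (Finset.mem_filter.2 ⟨hc.1, hc.2⟩)
    simp [Finset.mem_filter, hps, hpA]

/-- Detailed state supported on singletons `{t}` (mass `y t`) and pairs `{i,t}` (mass `a t`). -/
def pairstate (i : Fin I) (y a : Fin I → ℕ) : Finset (Fin I) → ℕ :=
  fun B => (∑ t, if B = {t} then y t else 0) + (∑ t, if B = insert i {t} then a t else 0)

lemma pairstate_empty (i : Fin I) (y a : Fin I → ℕ) : pairstate i y a ∅ = 0 := by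
  unfold pairstate
  rw [Finset.sum_eq_zero (fun t _ => if_neg (fun h => (Finset.singleton_ne_empty t) h.symm)),
    Finset.sum_eq_zero (fun t _ => if_neg (fun h => (Finset.insert_ne_empty i {t}) h.symm))]
  rfl

lemma psi_pairstate (i : Fin I) (y a : Fin I → ℕ) (u : Fin I) :
    psi (pairstate i y a) u = y u + if u = i then ∑ t, a t else a u := by
  unfold psi pairstate
  rw [Finset.sum_add_distrib]
  congr 1
  · rw [Finset.sum_comm]
    have h1 : ∀ t : Fin I,
        (∑ A ∈ Finset.univ.filter (fun A => u ∈ A), (if A = ({t} : Finset (Fin I)) then y t else 0))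
        = if t = u then y t else 0 := by
      intro t
      rw [Finset.sum_ite_eq' (Finset.univ.filter (fun A => u ∈ A)) ({t} : Finset (Fin I))
        (fun _ => y t)]
      simp [Finset.mem_filter, eq_comm]
    rw [Finset.sum_congr rfl fun t _ => h1 t, Finset.sum_ite_eq' Finset.univ u y,
      if_pos (Finset.mem_univ u)]
  · rw [Finset.sum_comm]
    have hstep : ∀ t : Fin I,
        (∑ A ∈ Finset.univ.filter (fun A => u ∈ A), (if A = insert i ({t} : Finset (Fin I)) then a t else 0))
        = if u ∈ insert i ({t} : Finset (Fin I)) then a t else 0 := by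
      intro t
      rw [Finset.sum_ite_eq' (Finset.univ.filter (fun A => u ∈ A)) (insert i ({t} : Finset (Fin I)))
        (fun _ => a t)]
      simp [Finset.mem_filter]
    rw [Finset.sum_congr rfl fun t _ => hstep t]
    by_cases hui : u = i
    · subst hui
      rw [if_pos rfl]
      refine Finset.sum_congr rfl fun t _ => ?_
      simp
    · rw [if_neg hui]
      have h2 : ∀ t : Fin I, (if u ∈ insert i ({t} : Finset (Fin I)) then a t else 0)
          = if t = u then a t else 0 := by
        intro t
        simp [Finset.mem_insert, hui, eq_comm]
      rw [Finset.sum_congr rfl fun t _ => h2 t, Finset.sum_ite_eq' Finset.univ u a,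
        if_pos (Finset.mem_univ u)]

lemma sum_range_ite_Aset {i : Fin I} {K : ℕ} (hK : K ≤ 2 ^ (I - 1 - i.val))
    {S : Finset (Fin I)} {l0 : ℕ} (hl0 : l0 < 2 ^ (I - 1 - i.val)) (hS : Aset i l0 = S)
    (c : ℕ) :
    (∑ l ∈ Finset.range K, if Aset i l = S then c else 0) = if l0 < K then c else 0 := by
  by_cases h : l0 < K
  · rw [if_pos h, Finset.sum_eq_single l0]
    · rw [if_pos hS]
    · intro l hl hne
      rw [if_neg]
      intro hSl
      exact hne (Aset_inj (lt_of_lt_of_le (Finset.mem_range.1 hl) hK) hl0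
        (hSl.trans hS.symm))
    · intro h'
      exact absurd (Finset.mem_range.2 h) h'
  · rw [if_neg h]
    apply Finset.sum_eq_zero
    intro l hl
    rw [if_neg]
    intro hSl
    have := Aset_inj (lt_of_lt_of_le (Finset.mem_range.1 hl) hK) hl0 (hSl.trans hS.symm)
    have := Finset.mem_range.1 hl
    omega

lemma psum_pairstate {i : Fin I} {y a : Fin I → ℕ} (ha : ∀ t, ¬ i < t → a t = 0)
    {K : ℕ} (hK : K ≤ 2 ^ (I - 1 - i.val)) :
    psum i (pairstate i y a) K =
      (if 2 ^ (I - 1 - i.val) - 1 < K then y i else 0)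
      + ∑ t, if (i < t ∧ 2 ^ (I - 1 - i.val) - 1 - 2 ^ (I - 1 - t.val) < K)
          then a t else 0 := by
  have hm1 : 1 ≤ 2 ^ (I - 1 - i.val) := Nat.one_le_two_pow
  unfold psum pairstate
  rw [Finset.sum_add_distrib]
  congr 1
  · rw [Finset.sum_comm, Finset.sum_eq_single i]
    · exact sum_range_ite_Aset hK (by omega) (Aset_top i) (y i)
    · intro t _ hti
      apply Finset.sum_eq_zero
      intro l _
      rw [if_neg]
      intro h
      have := self_mem_Aset i l
      rw [h, Finset.mem_singleton] at this
      exact hti this.symm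
    · intro h
      exact absurd (Finset.mem_univ i) h
  · rw [Finset.sum_comm]
    refine Finset.sum_congr rfl fun t _ => ?_
    by_cases hit : i < t
    · have hbm : 2 ^ (I - 1 - t.val) ≥ 1 := Nat.one_le_two_pow
      rw [sum_range_ite_Aset hK (by omega) (Aset_pair hit) (a t)]
      simp [hit]
    · rw [ha t hit]
      simp

lemma exists_distrib {α : Type*} [DecidableEq α] (s : Finset α) (x : α → ℕ) :
    ∀ j, j ≤ ∑ t ∈ s, x t →
      ∃ a : α → ℕ, (∀ t, a t ≤ x t) ∧ (∀ t, t ∉ s → a t = 0) ∧ ∑ t ∈ s, a t = j := by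
  induction s using Finset.induction_on with
  | empty =>
    intro j hj
    simp only [Finset.sum_empty, Nat.le_zero] at hj
    subst hj
    exact ⟨fun _ => 0, fun _ => Nat.zero_le _, fun _ _ => rfl, by simp⟩
  | @insert v s' hvs ih =>
    intro j hj
    rw [Finset.sum_insert hvs] at hj
    obtain ⟨a, ha1, ha2, ha3⟩ := ih (j - min j (x v)) (by omega)
    refine ⟨Function.update a v (min j (x v)), ?_, ?_, ?_⟩
    · intro t
      by_cases h : t = v
      · rw [h, Function.update_self]; omega
      · rw [Function.update_of_ne h]; exact ha1 t
    · intro t ht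
      have h1 : t ≠ v := fun h => ht (by rw [h]; exact Finset.mem_insert_self v s')
      rw [Function.update_of_ne h1]
      exact ha2 t (fun h => ht (Finset.mem_insert_of_mem h))
    · rw [Finset.sum_insert hvs, Function.update_self,
        Finset.sum_congr rfl (fun t hts => Function.update_of_ne
          (fun h => hvs (by rwa [h] at hts)) _ a), ha3]
      omega

lemma exists_distrib' {α : Type*} [DecidableEq α] (s : Finset α) (x : α → ℕ) (p : α)
    (hp : p ∈ s) (hxp : 1 ≤ x p) {j : ℕ} (hj1 : 1 ≤ j) (hj : j ≤ ∑ t ∈ s, x t) :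
    ∃ a : α → ℕ, (∀ t, a t ≤ x t) ∧ (∀ t, t ∉ s → a t = 0)
      ∧ (∑ t ∈ s, a t = j) ∧ 1 ≤ a p := by
  have herase : x p + ∑ t ∈ s \ {p}, x t = ∑ t ∈ s, x t := by
    rw [← Finset.erase_eq]; exact Finset.add_sum_erase s x hp
  have hsum : ∑ t ∈ s, Function.update x p (x p - 1) t = (∑ t ∈ s, x t) - 1 := by
    rw [Finset.sum_update_of_mem hp]
    omega
  obtain ⟨a, ha1, ha2, ha3⟩ := exists_distrib s (Function.update x p (x p - 1)) (j - 1)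
    (by rw [hsum]; omega)
  have herasea : a p + ∑ t ∈ s \ {p}, a t = ∑ t ∈ s, a t := by
    rw [← Finset.erase_eq]; exact Finset.add_sum_erase s a hp
  refine ⟨Function.update a p (a p + 1), ?_, ?_, ?_, ?_⟩
  · intro t
    by_cases h : t = p
    · rw [h, Function.update_self]
      have := ha1 p
      rw [Function.update_self] at this
      omega
    · rw [Function.update_of_ne h]
      have := ha1 t
      rwa [Function.update_of_ne h] at this
  · intro t ht
    rw [Function.update_of_ne (fun h => ht (by rwa [h]))]
    exact ha2 t ht
  · rw [Finset.sum_update_of_mem hp]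
    omega
  · rw [Function.update_self]; omega

lemma sInf_image_eq {α : Type*} {D : Set α} {f : α → ℕ} {v : ℕ}
    (h1 : ∃ n ∈ D, f n = v) (h2 : ∀ n ∈ D, v ≤ f n) : sInf (f '' D) = v := by
  obtain ⟨n, hn, hv⟩ := h1
  refine le_antisymm (Nat.sInf_le ⟨n, hn, hv⟩) (le_csInf ⟨v, n, hn, hv⟩ ?_)
  rintro b ⟨m, hm, rfl⟩
  exact h2 m hm

lemma const_image {α : Type*} {D : Set α} {f : α → ℕ} {v : ℕ}
    (hne : D.Nonempty) (h : ∀ n ∈ D, f n = v) : f '' D = {v} := by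
  obtain ⟨n, hn⟩ := hne
  refine Set.eq_singleton_iff_unique_mem.2 ⟨⟨n, hn, h n hn⟩, ?_⟩
  rintro z ⟨m, hm, rfl⟩
  exact h m hm

end Aux2

/-- Lemma 6.3: transition function of the infimum chain. -/
theorem stmt13 (I : ℕ) (hI : 1 ≤ I) (C : Fin I → ℕ) (hC : ∀ i, 1 ≤ C i)
    (x : Fin I → ℕ) (hx : x ∈ Xspace C) :
    (∀ A : Finset (Fin I), A.Nonempty →
      finf C x (.d A) = fbar C x (.d A)
      ∧ finf C x (.d A) = fun k => x k + if k ∈ A ∧ x k < C k then 1 else 0)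
    ∧ (∀ (i : Fin I) (j : ℕ), 1 ≤ j → j ≤ C i → ∀ p : Fin I,
        (p < i → finf C x (.s i j) p = x p)
        ∧ (p = i → finf C x (.s i j) p = x i - if j ≤ x i then 1 else 0)
        ∧ (i < p → finf C x (.s i j) p =
            x p - if 0 < x p ∧
                j ≤ min (∑ t ∈ Finset.univ.filter (fun t => i < t ∧ t ≤ p), x t) (x i)
              then 1 else 0)) := by
  classical
  have hn0psi : ∀ i : Fin I, psi (pairstate i x 0) = x := fun i => funext fun u => by
    rw [psi_pairstate]; simp
  have hn0mem : ∀ i : Fin I, pairstate i x 0 ∈ Nspace C := fun i =>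
    ⟨pairstate_empty _ _ _, fun u => by
      show psi (pairstate i x 0) u ≤ C u
      rw [hn0psi]; exact hx u⟩
  have hDne : ∀ i : Fin I, pairstate i x 0 ∈ {n | n ∈ Nspace C ∧ psi n = x} := fun i =>
    ⟨hn0mem i, hn0psi i⟩
  constructor
  · -- demands
    intro A hA
    have him : ∀ p : Fin I,
        (fun n => psi (ftil C n (.d A)) p) '' {n | n ∈ Nspace C ∧ psi n = x}
        = {x p + if (p ∈ A ∧ x p < C p) then 1 else 0} := fun p =>
      const_image ⟨_, hDne ⟨0, hI⟩⟩ (fun n hn => by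
        rw [psi_ftil_d, hn.2])
    constructor
    · funext p
      show sInf _ = sSup _
      rw [him p, csInf_singleton, csSup_singleton]
    · funext p
      show sInf _ = _
      rw [him p, csInf_singleton]
  · -- services
    intro i j hj1 hjC p
    refine ⟨?_, ?_, ?_⟩
    · -- p < i
      intro hpi
      show sInf _ = x p
      have hall : ∀ n ∈ {n | n ∈ Nspace C ∧ psi n = x},
          psi (ftil C n (.s i j)) p = x p := by
        intro n hn
        rw [psi_ftil_s hj1, hn.2, if_neg, Nat.sub_zero]
        rintro ⟨-, hp⟩
        rcases mem_Aset.1 hp with rfl | ⟨h, -⟩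
        · exact absurd hpi (lt_irrefl _)
        · exact absurd hpi h.asymm
      exact sInf_image_eq ⟨_, hDne i, hall _ (hDne i)⟩ (fun n hn => (hall n hn).ge)
    · -- p = i
      intro hpe
      subst hpe
      by_cases hji : j ≤ x p
      · rw [if_pos hji]
        show sInf _ = x p - 1
        have hpsum : psum p (pairstate p x 0) (2 ^ (I - 1 - p.val)) = x p := by
          rw [psum_pairstate (a := (0 : Fin I → ℕ)) (fun t _ => rfl) (le_refl _)]
          have h1 : 1 ≤ 2 ^ (I - 1 - p.val) := Nat.one_le_two_pow
          rw [if_pos (by omega)]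
          simp
        have hval : psi (ftil C (pairstate p x 0) (.s p j)) p = x p - 1 := by
          rw [psi_ftil_s hj1, hn0psi p,
            if_pos ⟨by rw [hpsum]; exact hji, self_mem_Aset p _⟩]
        refine sInf_image_eq ⟨_, hDne p, hval⟩ ?_
        intro n hn
        rw [psi_ftil_s hj1, hn.2]
        split_ifs <;> omega
      · rw [if_neg hji, Nat.sub_zero]
        show sInf _ = x p
        have hall : ∀ n ∈ {n | n ∈ Nspace C ∧ psi n = x},
            psi (ftil C n (.s p j)) p = x p := by
          intro n hn
          rw [psi_ftil_s hj1, hn.2, if_neg, Nat.sub_zero]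
          rintro ⟨hc, -⟩
          apply hji
          calc j ≤ psum p n (2 ^ (I - 1 - p.val)) := hc
            _ ≤ psi n p := psum_le_psi n
            _ = x p := by rw [hn.2]
        exact sInf_image_eq ⟨_, hDne p, hall _ (hDne p)⟩ (fun n hn => (hall n hn).ge)
    · -- i < p
      intro hip
      have hI' := i.isLt
      have hP := p.isLt
      have hm1 : 1 ≤ 2 ^ (I - 1 - i.val) := Nat.one_le_two_pow
      have hblt : I - 1 - p.val < I - 1 - i.val := by rw [Fin.lt_def] at hip; omega
      have hb1 : 1 ≤ 2 ^ (I - 1 - p.val) := Nat.one_le_two_pow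
      have hbm : 2 ^ (I - 1 - p.val) < 2 ^ (I - 1 - i.val) :=
        Nat.pow_lt_pow_right one_lt_two hblt
      by_cases hcond : 0 < x p ∧
          j ≤ min (∑ t ∈ Finset.univ.filter (fun t => i < t ∧ t ≤ p), x t) (x i)
      · rw [if_pos hcond]
        show sInf _ = x p - 1
        obtain ⟨hxp, hjm⟩ := hcond
        rw [le_min_iff] at hjm
        obtain ⟨hjs, hji⟩ := hjm
        obtain ⟨a, ha1, ha2, ha3, ha4⟩ :=
          exists_distrib' (Finset.univ.filter (fun t : Fin I => i < t ∧ t ≤ p)) x p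
            (Finset.mem_filter.2 ⟨Finset.mem_univ _, hip, le_refl p⟩) hxp hj1 hjs
        have hasupp : ∀ t, ¬ i < t → a t = 0 :=
          fun t ht => ha2 t (fun hts => ht (Finset.mem_filter.1 hts).2.1)
        set y : Fin I → ℕ := fun t => if t = i then x i - j else x t - a t with hy
        set n1 := pairstate i y a with hn1def
        have hsuma : ∑ t, a t = j := by
          rw [← ha3]
          exact (Finset.sum_subset
            (Finset.subset_univ (Finset.univ.filter (fun t : Fin I => i < t ∧ t ≤ p)))
            (fun t _ hts => ha2 t hts)).symm
        have hpsin1 : psi n1 = x := funext fun u => by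
          rw [hn1def, psi_pairstate]
          by_cases hui : u = i
          · rw [hui]
            have h1 : y i = x i - j := if_pos rfl
            rw [h1, if_pos rfl, hsuma]
            omega
          · have h1 : y u = x u - a u := if_neg hui
            rw [h1, if_neg hui]
            have := ha1 u
            omega
        have hn1mem : n1 ∈ Nspace C := ⟨pairstate_empty _ _ _, fun u => by
          show psi n1 u ≤ C u
          rw [hpsin1]; exact hx u⟩
        set kstar := 2 ^ (I - 1 - i.val) - 1 - 2 ^ (I - 1 - p.val) with hkstar
        have hcompute : ∀ K, K ≤ 2 ^ (I - 1 - i.val) → K ≤ kstar + 1 →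
            psum i n1 K = ∑ t, if (i < t ∧
              2 ^ (I - 1 - i.val) - 1 - 2 ^ (I - 1 - t.val) < K) then a t else 0 := by
          intro K hK1 hK2
          rw [hn1def, psum_pairstate hasupp hK1, if_neg (by omega), zero_add]
        have hpsum_star : psum i n1 (kstar + 1) = j := by
          rw [hcompute (kstar + 1) (by omega) (le_refl _), ← hsuma]
          refine Finset.sum_congr rfl fun t _ => ?_
          by_cases hts : i < t ∧ t ≤ p
          · have hT := t.isLt
            have hle2 : 2 ^ (I - 1 - p.val) ≤ 2 ^ (I - 1 - t.val) :=
              Nat.pow_le_pow_right (by norm_num)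
                (by have := hts.2; rw [Fin.le_def] at this; omega)
            exact if_pos ⟨hts.1, by omega⟩
          · rw [show a t = 0 from ha2 t (fun hmem => hts
              ⟨(Finset.mem_filter.1 hmem).2.1, (Finset.mem_filter.1 hmem).2.2⟩)]
            simp
        have hAkstar : Aset i kstar = {i, p} := Aset_pair hip
        have h5 : a p ≤ n1 (Aset i kstar) := by
          rw [hAkstar]
          have hsingle := Finset.single_le_sum
            (f := fun t => if ({i, p} : Finset (Fin I)) = insert i ({t} : Finset (Fin I))
              then a t else 0)
            (fun _ _ => Nat.zero_le _) (Finset.mem_univ p)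
          calc a p ≤ ∑ t, (if ({i, p} : Finset (Fin I)) = insert i ({t} : Finset (Fin I))
              then a t else 0) := by simpa using hsingle
            _ ≤ n1 ({i, p} : Finset (Fin I)) := Nat.le_add_left _ _
        have hps := psum_succ (i := i) n1 kstar
        have hstep : j ≤ psum i n1 (2 ^ (I - 1 - i.val)) := by
          have := psum_mono (i := i) n1 (show kstar + 1 ≤ 2 ^ (I - 1 - i.val) by omega)
          omega
        have hk0 : sInf {k | j ≤ psum i n1 (k + 1)} = kstar := by
          have hmem : kstar ∈ {k | j ≤ psum i n1 (k + 1)} := by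
            simp only [Set.mem_setOf_eq]; omega
          refine le_antisymm (Nat.sInf_le hmem) ?_
          by_contra h
          push_neg at h
          have hmem2 := Nat.sInf_mem (⟨kstar, hmem⟩ :
            Set.Nonempty {k | j ≤ psum i n1 (k + 1)})
          simp only [Set.mem_setOf_eq] at hmem2
          have := psum_mono (i := i) n1
            (show sInf {k | j ≤ psum i n1 (k + 1)} + 1 ≤ kstar by omega)
          omega
        have hval : psi (ftil C n1 (.s i j)) p = x p - 1 := by
          rw [psi_ftil_s hj1, hpsin1, if_pos ⟨hstep, by rw [hk0, hAkstar]; simp⟩]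
        refine sInf_image_eq ⟨n1, ⟨hn1mem, hpsin1⟩, hval⟩ ?_
        intro n hn
        rw [psi_ftil_s hj1, hn.2]
        split_ifs <;> omega
      · rw [if_neg hcond, Nat.sub_zero]
        show sInf _ = x p
        have hall : ∀ n ∈ {n | n ∈ Nspace C ∧ psi n = x},
            psi (ftil C n (.s i j)) p = x p := by
          intro n hn
          rw [psi_ftil_s hj1, hn.2, if_neg, Nat.sub_zero]
          rintro ⟨hc, hp⟩
          obtain ⟨hk0lt, hle1, -, hge1⟩ := step_facts hj1 hc
          apply hcond
          constructor
          · rw [← hn.2]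
            calc 1 ≤ n (Aset i (sInf {k | j ≤ psum i n (k + 1)})) := hge1
              _ ≤ psi n p := Finset.single_le_sum (fun _ _ => Nat.zero_le _)
                  (Finset.mem_filter.2 ⟨Finset.mem_univ _, hp⟩)
          · rw [le_min_iff]
            constructor
            · calc j ≤ psum i n (sInf {k | j ≤ psum i n (k + 1)} + 1) := hle1
                _ ≤ ∑ t ∈ Finset.univ.filter (fun t => i < t ∧ t ≤ p), psi n t :=
                    psum_le_sum_Ioc hip n hk0lt hp
                _ = ∑ t ∈ Finset.univ.filter (fun t => i < t ∧ t ≤ p), x t := by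
                    rw [hn.2]
            · calc j ≤ psum i n (2 ^ (I - 1 - i.val)) := hc
                _ ≤ psi n i := psum_le_psi n
                _ = x i := by rw [hn.2]
        exact sInf_image_eq ⟨_, hDne i, hall _ (hDne i)⟩ (fun n hn => (hall n hn).ge)

end ATO
end
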